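/- arXiv:0808.1762 — 4 statements merged into one kernel-verified Lean document; each statement's English description precedes it below -/
import Mathlib

section
/- For all sufficiently large n (n ≥ 32 suffices), and any symmetric Boolean function f:{0,1}^n→{0,1} other than the constant 0 function, the constant 1 function, the parity function x ↦ |x| mod 2, and the negation of the parity function, there exists w ∈ {0,1}^n such that the Fourier coefficient f̃(w) ≠ 0 and n/8 ≤ |w| ≤ 7n/8. -/
/-!
Suppose every Fourier coefficient of weight strictly between `d = ⌊n/8⌋` and `n - d` vanishes.
The coefficients of a symmetric function depend only on `|w|`, so Fourier inversion splits
`f(x)` into a low-weight and a high-weight sum, each of which is a polynomial of degree `≤ d`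
in `|x|` (expand `Σ_{|w| = k} (-1)^{x·w}` by how many ones of `w` meet those of `x`);
complementing `w` turns the high sum into `(-1)^{|x|}` times a low one. Hence on even weights,
and on odd weights, `f` is a polynomial of degree `≤ d` in `⌊|x|/2⌋` that takes only the
values `0, 1` at more than `2d` points, so it is constant. A symmetric function that is
constant on both parity classes is a constant or a (negated) parity.
-/

namespace SymXOR

/-- Hamming weight of a Boolean vector. -/
def hammingWeight {n : ℕ} (x : Fin n → Bool) : ℕ :=
  (Finset.univ.filter fun i => x i = true).card

/-- The inner product `x·w = Σ_i x_i w_i` of two Boolean vectors. -/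
def dotProd {n : ℕ} (x w : Fin n → Bool) : ℕ :=
  (Finset.univ.filter fun i => x i = true ∧ w i = true).card

/-- A Boolean value viewed as a real number. -/
noncomputable def boolToReal (b : Bool) : ℝ := if b then 1 else 0

/-- The Fourier coefficient `f̃(w) = 2^{-n} Σ_x (-1)^{x·w} f(x)`. -/
noncomputable def fourierCoeff {n : ℕ} (f : (Fin n → Bool) → Bool) (w : Fin n → Bool) : ℝ :=
  (1 / 2 ^ n) * ∑ x : Fin n → Bool, (-1 : ℝ) ^ dotProd x w * boolToReal (f x)

open Finset Polynomial

section BoolWeight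

variable {α : Type*} [Fintype α]

def boolWeight (x : α → Bool) : ℕ := #{i | x i = true}

theorem boolWeight_restrict_add (p : α → Prop) [DecidablePred p] (y : α → Bool) :
    boolWeight (fun i : {i // p i} => y i) + boolWeight (fun i : {i // ¬p i} => y i)
      = boolWeight y := by
  simp only [boolWeight, card_filter]
  exact Fintype.sum_subtype_add_sum_subtype p fun i => if y i = true then 1 else 0

variable [DecidableEq α] {M : Type*} [AddCommMonoid M]

theorem sum_apply_boolWeight (F : ℕ → M) :
    ∑ y : α → Bool, F (boolWeight y)
      = ∑ j ∈ range (Fintype.card α + 1), (Fintype.card α).choose j • F j := by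
  rw [← card_univ, ← sum_powerset_apply_card]
  exact sum_nbij' (fun y => ({i | y i = true} : Finset α)) (fun s i => decide (i ∈ s))
    (by simp) (by simp) (fun y _ => by funext i; simp) (fun s _ => by ext i; simp)
    (fun y _ => rfl)

theorem sum_apply_boolWeight_restrict (p : α → Prop) [DecidablePred p] (H : ℕ → ℕ → M) :
    ∑ y : α → Bool,
        H (boolWeight (fun i : {i // p i} => y i)) (boolWeight (fun i : {i // ¬p i} => y i))
      = ∑ j ∈ range (Fintype.card {i // p i} + 1), (Fintype.card {i // p i}).choose j •
          ∑ k ∈ range (Fintype.card {i // ¬p i} + 1),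
            (Fintype.card {i // ¬p i}).choose k • H j k := by
  set e := Equiv.piEquivPiSubtypeProd p fun _ => Bool
  have h₁ z : (fun i : {i // p i} => e.symm z i) = z.1 :=
    congrArg Prod.fst (e.apply_symm_apply z)
  have h₂ z : (fun i : {i // ¬p i} => e.symm z i) = z.2 :=
    congrArg Prod.snd (e.apply_symm_apply z)
  rw [← e.symm.sum_comp, Fintype.sum_prod_type]
  simp only [h₁, h₂, sum_apply_boolWeight]
  exact sum_apply_boolWeight fun j =>
    ∑ k ∈ range (Fintype.card {i // ¬p i} + 1), (Fintype.card {i // ¬p i}).choose k • H j k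

end BoolWeight

theorem sum_range_choose_smul_of_le {M : Type*} [AddCommMonoid M] {a N : ℕ} (h : a ≤ N)
    (F : ℕ → M) :
    ∑ j ∈ range (a + 1), a.choose j • F j = ∑ j ∈ range (N + 1), a.choose j • F j :=
  sum_subset (range_subset_range.2 (by omega)) fun j _ hj => by
    rw [Nat.choose_eq_zero_of_lt (by simpa using hj), zero_smul]

section HammingWeight

variable {n : ℕ}

theorem hammingWeight_le (x : Fin n → Bool) : hammingWeight x ≤ n :=
  (card_filter_le _ _).trans_eq (card_fin n)

theorem exists_hammingWeight_eq {m : ℕ} (hm : m ≤ n) :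
    ∃ x : Fin n → Bool, hammingWeight x = m := by
  obtain ⟨s, -, hs⟩ := exists_subset_card_eq (s := (univ : Finset (Fin n))) (by simpa using hm)
  exact ⟨fun i => decide (i ∈ s), by simpa [hammingWeight] using hs⟩

theorem dotProd_comm (x w : Fin n → Bool) : dotProd x w = dotProd w x := by
  simp only [dotProd, and_comm]

theorem hammingWeight_not_add (w : Fin n → Bool) :
    hammingWeight (fun i => !w i) + hammingWeight w = n := by
  simp only [hammingWeight, card_filter, ← sum_add_distrib]
  calc _ = ∑ _i : Fin n, 1 := sum_congr rfl fun i _ => by cases w i <;> rfl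
    _ = n := by simp

theorem dotProd_not_add (x w : Fin n → Bool) :
    dotProd x (fun i => !w i) + dotProd x w = hammingWeight x := by
  simp only [dotProd, hammingWeight, card_filter, ← sum_add_distrib]
  exact sum_congr rfl fun i _ => by cases x i <;> cases w i <;> rfl

theorem dotProd_eq_boolWeight_restrict (x w : Fin n → Bool) :
    dotProd x w = boolWeight (fun i : {i // x i = true} => w i) := by
  rw [dotProd, boolWeight, ← Fintype.card_subtype, ← Fintype.card_subtype]
  exact Fintype.card_congr (Equiv.subtypeSubtypeEquivSubtypeInter _ _).symm

theorem sum_apply_dotProd_hammingWeight {M : Type*} [AddCommMonoid M] (x : Fin n → Bool)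
    (G : ℕ → ℕ → M) :
    ∑ w, G (dotProd x w) (hammingWeight w)
      = ∑ j ∈ range (n + 1), (hammingWeight x).choose j •
          ∑ k ∈ range (n + 1), (n - hammingWeight x).choose k • G j (j + k) := by
  -- `j` counts the ones of `w` on the support of `x`, `k` those off it.
  have hcard : Fintype.card {i // x i = true} = hammingWeight x := Fintype.card_subtype _
  have hcard' : Fintype.card {i // ¬x i = true} = n - hammingWeight x := by
    rw [Fintype.card_subtype_compl, hcard, Fintype.card_fin]
  have hsplit := sum_apply_boolWeight_restrict (fun i => x i = true) fun j k => G j (j + k)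
  rw [hcard, hcard', sum_range_choose_smul_of_le (hammingWeight_le x)] at hsplit
  simp only [sum_range_choose_smul_of_le (Nat.sub_le n (hammingWeight x))] at hsplit
  rw [← hsplit]
  refine sum_congr rfl fun w _ => ?_
  rw [dotProd_eq_boolWeight_restrict, boolWeight_restrict_add]
  rfl

end HammingWeight

section Fourier

variable {n : ℕ}

theorem pow_dotProd_eq_prod {M : Type*} [CommMonoid M] (a : M) (x w : Fin n → Bool) :
    a ^ dotProd x w = ∏ i, if x i = true ∧ w i = true then a else 1 := by
  rw [dotProd, prod_ite, prod_const_one, mul_one, prod_const]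

theorem sum_neg_one_pow_dotProd_mul (x y : Fin n → Bool) :
    ∑ w, (-1 : ℝ) ^ dotProd y w * (-1) ^ dotProd x w = if y = x then 2 ^ n else 0 := by
  have hfactor i : ∑ b : Bool, (if y i = true ∧ b = true then (-1 : ℝ) else 1)
      * (if x i = true ∧ b = true then -1 else 1) = if y i = x i then 2 else 0 := by
    cases y i <;> cases x i <;> norm_num
  simp only [pow_dotProd_eq_prod, ← prod_mul_distrib]
  rw [← Fintype.prod_sum fun i b => (if y i = true ∧ b = true then (-1 : ℝ) else 1)
      * (if x i = true ∧ b = true then -1 else 1)]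
  simp only [hfactor, Fintype.prod_ite_zero, prod_const, card_univ, Fintype.card_fin, funext_iff]

theorem boolToReal_eq_sum_fourierCoeff_mul (f : (Fin n → Bool) → Bool) (x : Fin n → Bool) :
    boolToReal (f x) = ∑ w, fourierCoeff f w * (-1) ^ dotProd x w := by
  calc boolToReal (f x)
      = 1 / 2 ^ n * ∑ y, boolToReal (f y) * if y = x then (2 : ℝ) ^ n else 0 := by
        simp only [mul_ite, mul_zero, sum_ite_eq', mem_univ, if_true]
        field_simp
    _ = ∑ w, fourierCoeff f w * (-1) ^ dotProd x w := by
        simp only [← sum_neg_one_pow_dotProd_mul, fourierCoeff, mul_sum, sum_mul]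
        rw [sum_comm]
        exact sum_congr rfl fun w _ => sum_congr rfl fun y _ => by ring

theorem fourierCoeff_eq_of_hammingWeight_eq {f : (Fin n → Bool) → Bool}
    (hsymm : ∀ x y, hammingWeight x = hammingWeight y → f x = f y) {w w' : Fin n → Bool}
    (h : hammingWeight w = hammingWeight w') : fourierCoeff f w = fourierCoeff f w' := by
  set F := Function.extend hammingWeight f fun _ => false
  have hF x : F (hammingWeight x) = f x := Function.FactorsThrough.extend_apply hsymm _ x
  have key v : fourierCoeff f v = 1 / 2 ^ n *
      ∑ j ∈ range (n + 1), (hammingWeight v).choose j •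
        ∑ k ∈ range (n + 1), (n - hammingWeight v).choose k •
          ((-1 : ℝ) ^ j * boolToReal (F (j + k))) := by
    rw [fourierCoeff,
      ← sum_apply_dotProd_hammingWeight v fun a b => (-1 : ℝ) ^ a * boolToReal (F b)]
    simp only [dotProd_comm v, hF]
  rw [key, key, h]

theorem sum_apply_sub_hammingWeight_mul (c : ℕ → ℝ) (x : Fin n → Bool) :
    ∑ w, c (n - hammingWeight w) * (-1) ^ dotProd x w
      = (-1) ^ hammingWeight x * ∑ w, c (hammingWeight w) * (-1) ^ dotProd x w := by
  have hnot : Function.Involutive fun (w : Fin n → Bool) i => !w i :=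
    fun w => funext fun i => Bool.not_not (w i)
  rw [← Equiv.sum_comp hnot.toPerm, mul_sum]
  refine sum_congr rfl fun v _ => ?_
  have hweight : n - hammingWeight (fun i => !v i) = hammingWeight v := by
    have := hammingWeight_not_add v
    omega
  have hsign : (-1 : ℝ) ^ dotProd x (fun i => !v i)
      = (-1) ^ hammingWeight x * (-1) ^ dotProd x v := by
    rw [← dotProd_not_add x v, pow_add, mul_assoc, ← pow_add, ← two_mul, pow_mul]
    norm_num
  simp only [Function.Involutive.coe_toPerm, hweight, hsign]
  ring

end Fourier

section ChoosePoly

variable (K : Type*) [Field K]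

noncomputable def choosePoly (j : ℕ) : K[X] := (j.factorial : K)⁻¹ • descPochhammer K j

theorem natDegree_choosePoly_le (j : ℕ) : (choosePoly K j).natDegree ≤ j :=
  (natDegree_smul_le _ _).trans (descPochhammer_natDegree K j).le

variable [CharZero K]

theorem eval_choosePoly (j m : ℕ) : (choosePoly K j).eval (m : K) = m.choose j := by
  rw [choosePoly, eval_smul, smul_eq_mul, descPochhammer_eval_eq_descFactorial,
    Nat.descFactorial_eq_factorial_mul_choose, Nat.cast_mul,
    inv_mul_cancel_left₀ (Nat.cast_ne_zero.2 j.factorial_ne_zero)]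

end ChoosePoly

theorem exists_natDegree_le_eval_hammingWeight_eq_sum {n d : ℕ} (c : ℕ → ℝ)
    (hc : ∀ k, d < k → c k = 0) :
    ∃ p : ℝ[X], p.natDegree ≤ d ∧ ∀ x : Fin n → Bool,
      p.eval (hammingWeight x : ℝ) = ∑ w, c (hammingWeight w) * (-1) ^ dotProd x w := by
  -- `|x|.choose j * (n - |x|).choose k` has degree `j + k` in `|x|`, and `c` kills `j + k > d`.
  refine ⟨∑ j ∈ range (n + 1), ∑ k ∈ range (n + 1), ((-1) ^ j * c (j + k)) •
      (choosePoly ℝ j * (choosePoly ℝ k).comp (C (n : ℝ) - X)), ?_, fun x => ?_⟩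
  · refine natDegree_sum_le_of_forall_le _ _ fun j _ =>
      natDegree_sum_le_of_forall_le _ _ fun k _ => ?_
    rcases lt_or_ge d (j + k) with hjk | hjk
    · simp [hc _ hjk]
    refine (natDegree_smul_le _ _).trans <| natDegree_mul_le.trans <| le_trans ?_ hjk
    refine add_le_add (natDegree_choosePoly_le ℝ j) (natDegree_comp_le.trans ?_)
    calc _ ≤ k * 1 := Nat.mul_le_mul (natDegree_choosePoly_le ℝ k)
          ((natDegree_sub_le _ _).trans (by simp))
      _ = k := mul_one k
  · rw [sum_apply_dotProd_hammingWeight x fun a b => c b * (-1) ^ a]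
    simp only [eval_finsetSum, eval_smul, eval_mul, eval_comp, eval_sub, eval_C, eval_X,
      ← Nat.cast_sub (hammingWeight_le x), eval_choosePoly, smul_eq_mul, nsmul_eq_mul, mul_sum]
    exact sum_congr rfl fun j _ => sum_congr rfl fun k _ => by ring

theorem exists_natDegree_le_boolToReal_eq_of_fourierCoeff_eq_zero {n d : ℕ}
    {f : (Fin n → Bool) → Bool} (hsymm : ∀ x y, hammingWeight x = hammingWeight y → f x = f y)
    (hd : 2 * d < n)
    (hmid : ∀ w : Fin n → Bool, d < hammingWeight w → d < n - hammingWeight w →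
      fourierCoeff f w = 0) :
    ∃ p q : ℝ[X], p.natDegree ≤ d ∧ q.natDegree ≤ d ∧ ∀ x : Fin n → Bool,
      boolToReal (f x) = p.eval (hammingWeight x : ℝ)
        + (-1) ^ hammingWeight x * q.eval (hammingWeight x : ℝ) := by
  set a := Function.extend hammingWeight (fourierCoeff f) 0
  have ha w : a (hammingWeight w) = fourierCoeff f w :=
    Function.FactorsThrough.extend_apply (fun _ _ => fourierCoeff_eq_of_hammingWeight_eq hsymm)
      _ w
  set low : ℕ → ℝ := fun k => if k ≤ d then a k else 0
  set high : ℕ → ℝ := fun k => if k ≤ d then a (n - k) else 0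
  have hsplit w : fourierCoeff f w = low (hammingWeight w) + high (n - hammingWeight w) := by
    have := hammingWeight_le w
    by_cases hlo : hammingWeight w ≤ d
    · simp [low, high, hlo, ha, show ¬n - hammingWeight w ≤ d by omega]
    by_cases hhi : n - hammingWeight w ≤ d
    · simp [low, high, hlo, hhi, ha, Nat.sub_sub_self this]
    · simp [low, high, hlo, hhi, hmid w (by omega) (by omega)]
  obtain ⟨p, hp, hpx⟩ := exists_natDegree_le_eval_hammingWeight_eq_sum (n := n) (d := d) low
    fun k hk => if_neg (by omega)
  obtain ⟨q, hq, hqx⟩ := exists_natDegree_le_eval_hammingWeight_eq_sum (n := n) (d := d) high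
    fun k hk => if_neg (by omega)
  refine ⟨p, q, hp, hq, fun x => ?_⟩
  rw [boolToReal_eq_sum_fourierCoeff_mul, hpx, hqx, ← sum_apply_sub_hammingWeight_mul,
    ← sum_add_distrib]
  simp only [hsplit, add_mul]

theorem boolToReal_injective : Function.Injective boolToReal := by
  intro a b h
  cases a <;> cases b <;> simp_all [boolToReal]

theorem eq_of_natDegree_le_of_eval_eq_boolToReal {P : ℝ[X]} {d J : ℕ} {g : ℕ → Bool}
    (hdeg : P.natDegree ≤ d) (hJ : 2 * d < J)
    (hg : ∀ j < J, P.eval (j : ℝ) = boolToReal (g j)) {i j : ℕ} (hi : i < J) (hj : j < J) :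
    g i = g j := by
  -- One value of `g` is taken at more than `d` of the `J > 2d` points, which pins `P` down.
  have hconst b (hb : d < #{k ∈ range J | g k = b}) k (hk : k < J) : g k = b := by
    have hP : P = C (boolToReal b) := by
      refine eq_of_natDegree_lt_card_of_eval_eq' _ _
        ({k ∈ range J | g k = b}.image Nat.cast) ?_ ?_
      · simp only [mem_image, mem_filter, mem_range]
        rintro _ ⟨k, ⟨hk, rfl⟩, rfl⟩
        rw [hg k hk, eval_C]
      · rw [natDegree_C, Nat.max_zero, card_image_of_injective _ Nat.cast_injective]
        exact hdeg.trans_lt hb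
    exact boolToReal_injective (by rw [← hg k hk, hP, eval_C])
  have hcard := card_filter_add_card_filter_not (s := range J) fun k => g k = true
  simp only [Bool.not_eq_true, card_range] at hcard
  rcases lt_or_ge d #{k ∈ range J | g k = true} with htrue | hfalse
  · rw [hconst true htrue i hi, hconst true htrue j hj]
  · rw [hconst false (by omega) i hi, hconst false (by omega) j hj]

theorem eq_of_mod_two_eq_of_boolToReal_eq_eval {F : ℕ → Bool} {p q : ℝ[X]} {n d : ℕ}
    (hp : p.natDegree ≤ d) (hq : q.natDegree ≤ d) (hd : 4 * d < n)
    (hF : ∀ m ≤ n, boolToReal (F m) = p.eval (m : ℝ) + (-1) ^ m * q.eval (m : ℝ))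
    {m m' : ℕ} (hm : m ≤ n) (hm' : m' ≤ n) (hmod : m % 2 = m' % 2) : F m = F m' := by
  -- On the class `m = 2j + r` the sign `(-1)^m = (-1)^r` is constant.
  set r := m % 2
  set P := (p + (-1 : ℝ) ^ r • q).comp (C 2 * X + C (r : ℝ))
  have hdeg : P.natDegree ≤ d :=
    natDegree_comp_le.trans <| (Nat.mul_le_mul
      ((natDegree_add_le _ _).trans (max_le hp ((natDegree_smul_le _ _).trans hq)))
      natDegree_linear_le).trans_eq (mul_one d)
  have hP : ∀ j < (n - r) / 2 + 1, P.eval (j : ℝ) = boolToReal (F (2 * j + r)) := by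
    intro j hj
    rw [hF _ (by omega)]
    simp [P, pow_add, pow_mul]
  have := eq_of_natDegree_le_of_eval_eq_boolToReal hdeg (by omega) hP
    (i := m / 2) (j := m' / 2) (by omega) (by omega)
  rwa [Nat.div_add_mod, hmod, Nat.div_add_mod] at this

theorem eq_of_hammingWeight_mod_two_eq {n d : ℕ} {f : (Fin n → Bool) → Bool}
    (hsymm : ∀ x y, hammingWeight x = hammingWeight y → f x = f y) (hd : 4 * d < n)
    (hmid : ∀ w : Fin n → Bool, d < hammingWeight w → d < n - hammingWeight w →
      fourierCoeff f w = 0)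
    {x y : Fin n → Bool} (hxy : hammingWeight x % 2 = hammingWeight y % 2) : f x = f y := by
  obtain ⟨p, q, hp, hq, hpq⟩ :=
    exists_natDegree_le_boolToReal_eq_of_fourierCoeff_eq_zero hsymm (by omega) hmid
  set F := Function.extend hammingWeight f fun _ => false
  have hF x : F (hammingWeight x) = f x := Function.FactorsThrough.extend_apply hsymm _ x
  have hFm m (hm : m ≤ n) :
      boolToReal (F m) = p.eval (m : ℝ) + (-1) ^ m * q.eval (m : ℝ) := by
    obtain ⟨z, rfl⟩ := exists_hammingWeight_eq hm
    rw [hF, hpq]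
  rw [← hF x, ← hF y]
  exact eq_of_mod_two_eq_of_boolToReal_eq_eval hp hq hd hFm (hammingWeight_le x)
    (hammingWeight_le y) hxy

theorem eq_const_or_parity_of_hammingWeight_mod_two {n : ℕ} {f : (Fin n → Bool) → Bool}
    (hf : ∀ x y : Fin n → Bool, hammingWeight x % 2 = hammingWeight y % 2 → f x = f y) :
    f = (fun _ => false) ∨ f = (fun _ => true) ∨ f = (fun x => decide (hammingWeight x % 2 = 1))
      ∨ f = (fun x => !decide (hammingWeight x % 2 = 1)) := by
  set parity : (Fin n → Bool) → Bool := fun x => decide (hammingWeight x % 2 = 1)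
  have hfactor : Function.FactorsThrough f parity := fun x y h => hf x y <| by
    simp only [parity, decide_eq_decide] at h
    omega
  obtain ⟨G, rfl⟩ : ∃ G : Bool → Bool, f = G ∘ parity :=
    ⟨Function.extend parity f fun _ => false, funext fun x => (hfactor.extend_apply _ x).symm⟩
  have hG : G = (fun _ => false) ∨ G = (fun _ => true) ∨ G = id ∨ G = not := by
    cases h₀ : G false <;> cases h₁ : G true <;> simp [funext_iff, Bool.forall_bool, h₀, h₁]
  rcases hG with rfl | rfl | rfl | rfl
  exacts [Or.inl rfl, Or.inr (Or.inl rfl), Or.inr (Or.inr (Or.inl rfl)),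
    Or.inr (Or.inr (Or.inr rfl))]

theorem symmetric_has_middle_fourier_coeff_general {n : ℕ}
    (f : (Fin n → Bool) → Bool)
    (hsymm : ∀ x y, hammingWeight x = hammingWeight y → f x = f y)
    (h0 : f ≠ fun _ => false)
    (h1 : f ≠ fun _ => true)
    (hpar : f ≠ fun x => decide (hammingWeight x % 2 = 1))
    (hnpar : f ≠ fun x => !decide (hammingWeight x % 2 = 1)) :
    ∃ w : Fin n → Bool, fourierCoeff f w ≠ 0 ∧
      (n : ℝ) / 8 ≤ (hammingWeight w : ℝ) ∧ (hammingWeight w : ℝ) ≤ 7 * n / 8 := by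
  by_contra! hcon
  have hmid (w : Fin n → Bool) (hlo : n / 8 < hammingWeight w)
      (hhi : n / 8 < n - hammingWeight w) : fourierCoeff f w = 0 := by
    by_contra hw
    have hlo' : (n : ℝ) < 8 * hammingWeight w := by
      exact_mod_cast (by omega : n < 8 * hammingWeight w)
    have hhi' : (8 * hammingWeight w : ℝ) ≤ 7 * n := by
      exact_mod_cast (by omega : 8 * hammingWeight w ≤ 7 * n)
    linarith [hcon w hw (by linarith)]
  have hparity (x y : Fin n → Bool) (hxy : hammingWeight x % 2 = hammingWeight y % 2) :
      f x = f y := by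
    rcases n.eq_zero_or_pos with rfl | hn
    · exact congrArg f (Subsingleton.elim x y)
    · exact eq_of_hammingWeight_mod_two_eq hsymm (by omega) hmid hxy
  rcases eq_const_or_parity_of_hammingWeight_mod_two hparity with h | h | h | h
  exacts [h0 h, h1 h, hpar h, hnpar h]

/-- For all `n ≥ 32`, any symmetric Boolean function `f` on `{0,1}^n` other
than the constant 0 function, the constant 1 function, the parity function and its
negation, has a nonzero Fourier coefficient `f̃(w)` with `n/8 ≤ |w| ≤ 7n/8`. -/
theorem symmetric_has_middle_fourier_coeff {n : ℕ} (hn : 32 ≤ n)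
    (f : (Fin n → Bool) → Bool)
    (hsymm : ∀ x y, hammingWeight x = hammingWeight y → f x = f y)
    (h0 : f ≠ fun _ => false)
    (h1 : f ≠ fun _ => true)
    (hpar : f ≠ fun x => decide (hammingWeight x % 2 = 1))
    (hnpar : f ≠ fun x => !decide (hammingWeight x % 2 = 1)) :
    ∃ w : Fin n → Bool, fourierCoeff f w ≠ 0 ∧
      (n : ℝ) / 8 ≤ (hammingWeight w : ℝ) ∧ (hammingWeight w : ℝ) ≤ 7 * n / 8 :=
  symmetric_has_middle_fourier_coeff_general f hsymm h0 h1 hpar hnpar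

end SymXOR
end

section
/- Let f:{0,1}^n→{0,1} be a symmetric Boolean function, let f_s denote the common value of f on inputs of Hamming weight s, and let G be the real polynomial G = Σ_{s=0}^n f_s x^{n−s}. Then for any w ∈ {0,1}^n with |w| = k, the Fourier coefficient satisfies f̃(w) = 2^{−n} · T_n(G · (1−x)^k (1+x)^{n−k}), where T_n(g) denotes the coefficient of x^n in the polynomial g. -/
namespace SymXOR

open Polynomial Finset

/-- For a symmetric Boolean function `f` with value `F s` on inputs of
Hamming weight `s`, and `G = Σ_{s=0}^n f_s x^{n-s}`, the Fourier coefficient at any `w`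
of weight `k` is `2^{-n}` times the coefficient of `x^n` in `G · (1-x)^k (1+x)^{n-k}`. -/
theorem fourierCoeff_eq_coeff_poly {n : ℕ} (f : (Fin n → Bool) → Bool) (F : ℕ → Bool)
    (hsymm : ∀ x, f x = F (hammingWeight x)) (w : Fin n → Bool) :
    fourierCoeff f w = (1 / 2 ^ n) *
      (((∑ s ∈ Finset.range (n + 1), C (boolToReal (F s)) * X ^ (n - s)) *
          (1 - X) ^ hammingWeight w * (1 + X) ^ (n - hammingWeight w) :
        Polynomial ℝ)).coeff n := by
  set e : Fin n → ℝ := fun i => if w i = true then -1 else 1 with he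
  -- Step 1: product form
  have hk : (Finset.univ.filter fun i => w i = true).card = hammingWeight w := rfl
  have hprod : ((1 - X) ^ hammingWeight w * (1 + X) ^ (n - hammingWeight w) : Polynomial ℝ)
      = ∏ i : Fin n, (1 + C (e i) * X) := by
    rw [← Finset.prod_filter_mul_prod_filter_not Finset.univ (fun i => w i = true)]
    congr 1
    · rw [Finset.prod_congr rfl (fun i hi => ?_), Finset.prod_const, hk]
      simp only [Finset.mem_filter] at hi
      simp [he, hi.2]
      ring
    · rw [Finset.prod_congr rfl (fun i hi => ?_), Finset.prod_const]
      · congr 1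
        have := Finset.card_filter_add_card_filter_not (s := (Finset.univ : Finset (Fin n)))
          (p := fun i => w i = true)
        simp only [Finset.card_univ, Fintype.card_fin] at this
        omega
      · simp only [Finset.mem_filter] at hi
        simp [he, hi.2]
  -- Step 2: expand product
  have hexp : (∏ i : Fin n, (1 + C (e i) * X) : Polynomial ℝ) =
      ∑ t ∈ (univ : Finset (Fin n)).powerset, C (∏ i ∈ t, e i) * X ^ t.card := by
    simp_rw [add_comm (1 : Polynomial ℝ)]
    rw [Finset.prod_add]
    refine Finset.sum_congr rfl fun t _ => ?_
    rw [Finset.prod_const, one_pow, mul_one, Finset.prod_mul_distrib, Finset.prod_const,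
      map_prod]
  rw [mul_assoc, hprod, hexp, fourierCoeff]
  congr 1
  -- compute the coefficient
  rw [Finset.mul_sum, Polynomial.finset_sum_coeff]
  have hcoeff : ∀ s ∈ Finset.range (n+1), ∀ t ∈ (univ : Finset (Fin n)).powerset,
      ((C (boolToReal (F s)) * X ^ (n - s)) * (C (∏ i ∈ t, e i) * X ^ t.card)).coeff n
      = if t.card = s then boolToReal (F s) * ∏ i ∈ t, e i else 0 := by
    intro s hs t ht
    have hs' : s ≤ n := Nat.lt_succ_iff.mp (Finset.mem_range.mp hs)
    have ht' : t.card ≤ n := by simpa using Finset.card_le_card (Finset.mem_powerset.mp ht)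
    rw [mul_mul_mul_comm, ← C_mul, ← pow_add, Polynomial.coeff_C_mul, Polynomial.coeff_X_pow]
    have hiff : (n - s + t.card = n) ↔ (t.card = s) := by omega
    by_cases h : t.card = s
    · rw [if_pos (show n = n - s + t.card by omega), mul_one, if_pos h]
    · rw [if_neg (show ¬ n = n - s + t.card by omega), mul_zero, if_neg h]
  calc (∑ x : Fin n → Bool, (-1 : ℝ) ^ dotProd x w * boolToReal (f x))
      = ∑ t ∈ (univ : Finset (Fin n)).powerset,
          boolToReal (F t.card) * ∏ i ∈ t, e i := by
        rw [Finset.powerset_univ]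
        refine Finset.sum_nbij' (fun x => Finset.univ.filter fun i => x i = true)
          (fun t => fun i => decide (i ∈ t)) (fun _ _ => Finset.mem_univ _)
          (fun _ _ => Finset.mem_univ _) (fun x _ => funext fun i => by simp)
          (fun t _ => by ext i; simp) (fun x _ => ?_)
        have hpe : ∏ i ∈ Finset.univ.filter (fun i => x i = true), e i
            = (-1 : ℝ) ^ dotProd x w := by
          rw [he, Finset.prod_ite (f := fun _ => (-1:ℝ)) (g := fun _ => (1:ℝ)),
            Finset.prod_const, Finset.prod_const, one_pow, mul_one, Finset.filter_filter]
          rfl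
        rw [hsymm x, hpe, mul_comm]
        rfl
    _ = ∑ t ∈ (univ : Finset (Fin n)).powerset, ∑ s ∈ Finset.range (n+1),
          ((C (boolToReal (F s)) * X ^ (n - s)) * (C (∏ i ∈ t, e i) * X ^ t.card)).coeff n := by
        refine Finset.sum_congr rfl fun t ht => ?_
        rw [Finset.sum_congr rfl (fun s hs => hcoeff s hs t ht), Finset.sum_ite_eq]
        have ht' : t.card ≤ n := by simpa using Finset.card_le_card (Finset.mem_powerset.mp ht)
        simp [Nat.lt_succ_iff, ht']
    _ = _ := by
        refine Finset.sum_congr rfl fun t _ => ?_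
        rw [← Polynomial.finset_sum_coeff, ← Finset.sum_mul]


end SymXOR
end

section
/- Let G ∈ ℝ[x] be any polynomial and let t be an integer with 0 ≤ t ≤ n/2. If T_n(G · (1−x)^k (1+x)^{n−k}) = 0 for every integer k with t ≤ k ≤ n−t, then for every pair of integers i, j with i ≥ t, j ≥ t, and i + j ≤ n, it holds that T_n(G · (1−x)^i (1+x)^j) = 0. -/
/-!
Since `(1 - x) + (1 + x) = 2`, the coefficient `T_n(G (1-x)^i (1+x)^j)` is half the sum of the
coefficients at the exponent pairs `(i + 1, j)` and `(i, j + 1)`. Vanishing therefore propagates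
from the line `i + j = n`, where it is the hypothesis, down to all `i + j ≤ n` by induction on
`n - (i + j)`.
-/

namespace SymXOR

open Polynomial

section

variable {R : Type*} [CommRing R] [NoZeroDivisors R] [NeZero (2 : R)] {P : R[X]} {n : ℕ}

theorem coeff_eq_zero_of_coeff_mul_one_sub_X_of_coeff_mul_one_add_X
    (h₁ : (P * (1 - X)).coeff n = 0) (h₂ : (P * (1 + X)).coeff n = 0) : P.coeff n = 0 := by
  have hsum : P * (1 - X) + P * (1 + X) = C 2 * P := by
    rw [C_ofNat]
    ring
  have h2P : 2 * P.coeff n = 0 := by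
    rw [← coeff_C_mul, ← hsum, coeff_add, h₁, h₂, add_zero]
  exact (mul_eq_zero.mp h2P).resolve_left two_ne_zero

theorem coeff_mul_one_sub_X_pow_mul_one_add_X_pow_eq_zero {i j : ℕ}
    (h₁ : (P * (1 - X) ^ (i + 1) * (1 + X) ^ j).coeff n = 0)
    (h₂ : (P * (1 - X) ^ i * (1 + X) ^ (j + 1)).coeff n = 0) :
    (P * (1 - X) ^ i * (1 + X) ^ j).coeff n = 0 := by
  apply coeff_eq_zero_of_coeff_mul_one_sub_X_of_coeff_mul_one_add_X
  · convert h₁ using 2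
    ring
  · convert h₂ using 2
    ring

end

theorem coeff_vanish_of_band_vanish_general {n t : ℕ} (G : Polynomial ℝ)
    (h : ∀ k : ℕ, t ≤ k → k ≤ n - t → (G * (1 - X) ^ k * (1 + X) ^ (n - k)).coeff n = 0) :
    ∀ i j : ℕ, t ≤ i → t ≤ j → i + j ≤ n → (G * (1 - X) ^ i * (1 + X) ^ j).coeff n = 0 := by
  suffices key : ∀ s i j : ℕ, t ≤ i → t ≤ j → i + j + s = n →
      (G * (1 - X) ^ i * (1 + X) ^ j).coeff n = 0 from
    fun i j hi hj hij ↦ key (n - (i + j)) i j hi hj (by omega)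
  intro s
  induction s with
  | zero =>
    intro i j hi hj hij
    obtain rfl : j = n - i := by omega
    exact h i hi (by omega)
  | succ s ih =>
    intro i j hi hj hij
    exact coeff_mul_one_sub_X_pow_mul_one_add_X_pow_eq_zero
      (ih (i + 1) j (by omega) hj (by omega)) (ih i (j + 1) hi (by omega) (by omega))

/-- If the coefficient of `x^n` in `G·(1-x)^k(1+x)^{n-k}` vanishes for all
`t ≤ k ≤ n-t`, then the coefficient of `x^n` in `G·(1-x)^i(1+x)^j` vanishes for all
`i, j ≥ t` with `i + j ≤ n`. -/
theorem coeff_vanish_of_band_vanish {n t : ℕ} (G : Polynomial ℝ) (ht : 2 * t ≤ n)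
    (h : ∀ k : ℕ, t ≤ k → k ≤ n - t → (G * (1 - X) ^ k * (1 + X) ^ (n - k)).coeff n = 0) :
    ∀ i j : ℕ, t ≤ i → t ≤ j → i + j ≤ n → (G * (1 - X) ^ i * (1 + X) ^ j).coeff n = 0 :=
  coeff_vanish_of_band_vanish_general G h

end SymXOR
end

section
/- Let G ∈ ℝ[x] be any polynomial and let u be a nonnegative integer with 2u ≤ n. If T_n(G · (1−x)^u (1+x)^j) = 0 for every integer j with u ≤ j ≤ n−u, then T_s(G · (1−x²)^u) = 0 for every integer s with 2u ≤ s ≤ n. -/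
/-!
Put `H = G (1 - x)^u (1 + x)^u = G (1 - x²)^u`. The hypothesis says that the coefficient of `x^n`
in `H (1 + x)^k` vanishes for `0 ≤ k ≤ n - 2u`. That coefficient is `∑ᵢ C(k, i) H_{n-i}`, a
unitriangular system in `H_n, H_{n-1}, …, H_{2u}`, so all of these vanish.
-/

namespace SymXOR

open Polynomial Finset

theorem coeff_mul_one_add_X_pow {R : Type*} [Semiring R] (H : R[X]) (k n : ℕ) :
    (H * (1 + X) ^ k).coeff n = ∑ x ∈ antidiagonal n, H.coeff x.1 * (k.choose x.2 : R) := by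
  simp only [coeff_mul, coeff_one_add_X_pow]

theorem coeff_sub_eq_zero_of_coeff_mul_one_add_X_pow {R : Type*} [Semiring R] {H : R[X]}
    {m n : ℕ} (h : ∀ k ≤ m, (H * (1 + X) ^ k).coeff n = 0) :
    ∀ k ≤ m, k ≤ n → H.coeff (n - k) = 0 := by
  intro k
  induction k using Nat.strong_induction_on with
  | _ k ih =>
    intro hkm hkn
    have hsum := h k hkm
    rw [coeff_mul_one_add_X_pow, sum_eq_single (n - k, k)] at hsum
    · simpa using hsum
    · rintro ⟨a, b⟩ hab hne
      rw [HasAntidiagonal.mem_antidiagonal] at hab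
      have hbk : b ≠ k := fun hb => hne (Prod.ext (by simp only; omega) hb)
      rcases hbk.lt_or_gt with hbk | hkb
      · rw [show a = n - b by omega, ih b hbk (by omega) (by omega), zero_mul]
      · rw [Nat.choose_eq_zero_of_lt hkb, Nat.cast_zero, mul_zero]
    · exact fun hnot => (hnot (HasAntidiagonal.mem_antidiagonal.mpr (Nat.sub_add_cancel hkn))).elim

theorem coeff_one_sub_sq_vanish_general {n u : ℕ} (G : Polynomial ℝ)
    (h : ∀ j : ℕ, u ≤ j → j ≤ n - u → (G * (1 - X) ^ u * (1 + X) ^ j).coeff n = 0) :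
    ∀ s : ℕ, 2 * u ≤ s → s ≤ n → (G * (1 - X ^ 2) ^ u).coeff s = 0 := by
  intro s hs hsn
  have hsq : G * (1 - X ^ 2) ^ u = G * (1 - X) ^ u * (1 + X) ^ u := by
    rw [mul_assoc, ← mul_pow]
    ring
  have hH : ∀ k ≤ n - 2 * u, (G * (1 - X) ^ u * (1 + X) ^ u * (1 + X) ^ k).coeff n = 0 :=
    fun k hk => by simpa only [pow_add, mul_assoc] using h (u + k) (by omega) (by omega)
  rw [hsq, ← Nat.sub_sub_self hsn]
  exact coeff_sub_eq_zero_of_coeff_mul_one_add_X_pow hH (n - s) (by omega) (by omega)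

/-- If the coefficient of `x^n` in `G·(1-x)^u(1+x)^j` vanishes for all
`u ≤ j ≤ n-u`, then the coefficient of `x^s` in `G·(1-x²)^u` vanishes for all
`2u ≤ s ≤ n`. -/
theorem coeff_one_sub_sq_vanish {n u : ℕ} (G : Polynomial ℝ) (hu : 2 * u ≤ n)
    (h : ∀ j : ℕ, u ≤ j → j ≤ n - u → (G * (1 - X) ^ u * (1 + X) ^ j).coeff n = 0) :
    ∀ s : ℕ, 2 * u ≤ s → s ≤ n → (G * (1 - X ^ 2) ^ u).coeff s = 0 :=
  coeff_one_sub_sq_vanish_general G h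

end SymXOR
end
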